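/- For every even positive integer n, the function F_n(x) = Σ_{m=0}^n ((−n)_m (1/2)_m / ((1)_m m!)) x^m has a unique minimum point x_min in the open interval (1,2) (that is, F_n is strictly decreasing on [1, x_min] and strictly increasing on [x_min, 2]), and for every x ∈ [1,2] one has 0 < F_n(x) ≤ F_n(2) = n!/(2^n·((n/2)!)²) ≤ 1. -/

import Mathlib

open Real Finset

/-- Pochhammer symbol `(a)_n = a (a+1) ⋯ (a+n-1)`. -/
noncomputable def poch (a : ℝ) (n : ℕ) : ℝ := ∏ i ∈ Finset.range n, (a + i)

/-- Terminating Gauss hypergeometric function `₂F₁(-n, 1/2; 1; x)`. -/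
noncomputable def F2F1 (n : ℕ) (x : ℝ) : ℝ :=
  ∑ m ∈ Finset.range (n + 1),
    poch (-(n : ℝ)) m * poch (1/2) m / (poch 1 m * (Nat.factorial m : ℝ)) * x ^ m

/-!
Write `F_n = F2F1 n`. Averaging over `θ`, `F_n(x) = (2π)⁻¹ ∫₀^{2π} (1 - x cos² θ)^n dθ`; with the
extra weight `cos^{2p} θ` this gives polynomials `momentPoly p n`, and differentiating in `x` turns
`momentPoly p (n+1)` into `-(n+1) momentPoly (p+1) n`. For even `n` and `x < 4` the integrand is
nonnegative and positive at `θ = π/3`, so `F_n > 0` and `F_n'' = n (n-1) momentPoly 2 (n-2) > 0`.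
At `x = 1` the integrand `cos² θ sin^{2n-2} θ` of `-F_n'(1)/n` is nonnegative, so `F_n'(1) < 0`.
At `x = 2`, `1 - 2 cos² θ = -cos 2θ` reduces everything to the moments
`(2π)⁻¹ ∫ cos^{2m} = C(2m,m)/4^m`, giving `F_n'(2) > 0` and `F_n(2) = C(n,n/2)/2^n ≤ 1`.
Strict convexity yields the unique minimum and `F_n ≤ max (F_n(1), F_n(2)) = F_n(2)` on `[1,2]`;
the last step is `C(2n,n)/4^n ≤ C(n,n/2)/2^n`, Vandermonde's identity with every factor bounded by
the middle binomial coefficient.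
-/

open intervalIntegral

lemma centralBinom_succ_div_four_pow (k : ℕ) :
    ((k + 1).centralBinom : ℝ) / 4 ^ (k + 1)
      = (2 * k + 1) / (2 * k + 2) * ((k.centralBinom : ℝ) / 4 ^ k) := by
  have key : ((k : ℝ) + 1) * ((k + 1).centralBinom : ℝ) = 2 * (2 * k + 1) * k.centralBinom := by
    exact_mod_cast Nat.succ_mul_centralBinom_succ k
  rw [pow_succ]
  field_simp
  linear_combination 2 * key

lemma centralBinom_div_four_pow (k : ℕ) :
    (k.centralBinom : ℝ) / 4 ^ k = (2 * k).factorial / (2 ^ (2 * k) * (k.factorial : ℝ) ^ 2) := by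
  rw [Nat.centralBinom_eq_two_mul_choose, Nat.cast_choose ℝ (by omega : k ≤ 2 * k),
    show 2 * k - k = k by omega, pow_mul]
  ring

lemma centralBinom_two_mul_le (k : ℕ) : (2 * k).centralBinom ≤ k.centralBinom * 4 ^ k := by
  have hmid : ∀ i, (2 * k).choose i ≤ k.centralBinom := fun i => by
    simpa [Nat.centralBinom_eq_two_mul_choose] using Nat.choose_le_middle i (2 * k)
  calc (2 * k).centralBinom
      = ∑ ij ∈ antidiagonal (2 * k), (2 * k).choose ij.1 * (2 * k).choose ij.2 := by
        rw [Nat.centralBinom_eq_two_mul_choose, two_mul (2 * k), Nat.add_choose_eq]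
    _ ≤ ∑ ij ∈ antidiagonal (2 * k), (2 * k).choose ij.1 * k.centralBinom :=
        sum_le_sum fun ij _ => Nat.mul_le_mul_left _ (hmid ij.2)
    _ = k.centralBinom * 4 ^ k := by
        rw [← sum_mul, Nat.sum_antidiagonal_eq_sum_range_succ_mk, Nat.sum_range_choose, pow_mul,
          mul_comm]
        norm_num

lemma centralBinom_two_mul_div_le (k : ℕ) :
    ((2 * k).centralBinom : ℝ) / 4 ^ (2 * k) ≤ k.centralBinom / 4 ^ k := by
  rw [div_le_div_iff₀ (by positivity) (by positivity), pow_mul', pow_two, ← mul_assoc]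
  gcongr
  exact_mod_cast centralBinom_two_mul_le k

lemma integral_cos_pow_two_mul (m : ℕ) :
    ∫ θ in (0:ℝ)..2 * π, cos θ ^ (2 * m) = 2 * π * ((m.centralBinom : ℝ) / 4 ^ m) := by
  induction m with
  | zero => simp
  | succ k ih =>
    rw [mul_add_one, integral_cos_pow, ih, centralBinom_succ_div_four_pow]
    simp only [sin_zero, sin_two_pi, mul_zero, sub_self, zero_div, zero_add]
    push_cast
    ring

lemma integral_sin_pow_two_mul (m : ℕ) :
    ∫ θ in (0:ℝ)..2 * π, sin θ ^ (2 * m) = 2 * π * ((m.centralBinom : ℝ) / 4 ^ m) := by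
  induction m with
  | zero => simp
  | succ k ih =>
    rw [mul_add_one, integral_sin_pow, ih, centralBinom_succ_div_four_pow]
    simp only [sin_zero, sin_two_pi, ne_eq, Nat.succ_ne_zero, not_false_eq_true, zero_pow,
      zero_mul, sub_self, zero_div, zero_add]
    push_cast
    ring

lemma integral_cos_pow_two_mul_add_one (m : ℕ) :
    ∫ θ in (0:ℝ)..2 * π, cos θ ^ (2 * m + 1) = 0 := by
  induction m with
  | zero => simp
  | succ k ih => rw [show 2 * (k + 1) + 1 = 2 * k + 1 + 2 by ring, integral_cos_pow, ih]; simp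

lemma Function.Periodic.integral_comp_two_mul {f : ℝ → ℝ} {T : ℝ} (hf : Function.Periodic f T)
    (hfi : ∀ a b, IntervalIntegrable f MeasureTheory.volume a b) :
    ∫ x in (0:ℝ)..T, f (2 * x) = ∫ x in (0:ℝ)..T, f x := by
  have h := hf.intervalIntegral_add_eq_add 0 T hfi
  rw [zero_add] at h
  rw [integral_comp_mul_left _ two_ne_zero, mul_zero, two_mul, h, smul_eq_mul]
  ring

lemma integral_cos_two_mul_pow (j : ℕ) :
    ∫ θ in (0:ℝ)..2 * π, cos (2 * θ) ^ j = ∫ θ in (0:ℝ)..2 * π, cos θ ^ j :=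
  (cos_periodic.comp (· ^ j)).integral_comp_two_mul fun _ _ => by
    apply Continuous.intervalIntegrable; fun_prop

lemma poch_one (m : ℕ) : poch 1 m = m.factorial := by
  rw [poch, ← prod_range_add_one_eq_factorial]
  push_cast
  simp only [add_comm]

lemma poch_one_half (m : ℕ) : poch (1 / 2) m = m.centralBinom * m.factorial / 4 ^ m := by
  induction m with
  | zero => simp [poch]
  | succ k ih =>
    rw [poch, prod_range_succ, ← poch, ih, Nat.factorial_succ, Nat.cast_mul, mul_div_right_comm,
      mul_div_right_comm _ (_ * _), centralBinom_succ_div_four_pow]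
    field_simp
    push_cast
    ring

lemma poch_neg_natCast {n m : ℕ} (h : m ≤ n) : poch (-n) m = (-1) ^ m * n.descFactorial m := by
  induction m with
  | zero => simp [poch]
  | succ k ih =>
    rw [poch, prod_range_succ, ← poch, ih (by omega), Nat.descFactorial_succ,
      Nat.cast_mul, Nat.cast_sub (by omega)]
    ring

/-- `momentPoly p n x = (2π)⁻¹ ∫₀^{2π} cos^{2p} θ (1 - x cos² θ)^n dθ`
(`integral_eq_momentPoly`). -/
noncomputable def momentPoly (p n : ℕ) (x : ℝ) : ℝ :=
  ∑ m ∈ range (n + 1), (-1) ^ m * n.choose m * (((m + p).centralBinom : ℝ) / 4 ^ (m + p)) * x ^ m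

lemma F2F1_eq_momentPoly (n : ℕ) : F2F1 n = momentPoly 0 n := by
  funext x
  refine sum_congr rfl fun m hm => ?_
  have hmn : m ≤ n := Nat.lt_succ_iff.mp (mem_range.mp hm)
  rw [poch_neg_natCast hmn, poch_one_half, poch_one, Nat.descFactorial_eq_factorial_mul_choose,
    add_zero]
  have : (m.factorial : ℝ) ≠ 0 := by positivity
  push_cast
  field_simp

lemma integral_eq_momentPoly (p n : ℕ) (x : ℝ) :
    ∫ θ in (0:ℝ)..2 * π, cos θ ^ (2 * p) * (1 - x * cos θ ^ 2) ^ n = 2 * π * momentPoly p n x := by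
  have hexpand : ∀ θ, cos θ ^ (2 * p) * (1 - x * cos θ ^ 2) ^ n
      = ∑ m ∈ range (n + 1), (-1) ^ m * n.choose m * x ^ m * cos θ ^ (2 * (m + p)) := fun θ => by
    rw [sub_eq_neg_add, add_pow, mul_sum]
    refine sum_congr rfl fun m _ => ?_
    rw [neg_pow, mul_pow, mul_add, pow_add, pow_mul, pow_mul]
    ring
  simp_rw [hexpand]
  rw [integral_finsetSum fun m _ => by apply Continuous.intervalIntegrable; fun_prop,
    momentPoly, mul_sum]
  refine sum_congr rfl fun m _ => ?_
  rw [integral_const_mul, integral_cos_pow_two_mul]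
  ring

lemma hasDerivAt_momentPoly (p n : ℕ) (x : ℝ) :
    HasDerivAt (momentPoly p (n + 1)) (-(n + 1) * momentPoly (p + 1) n x) x := by
  refine (HasDerivAt.fun_sum (u := range (n + 2)) fun m _ => (hasDerivAt_pow m x).const_mul
    ((-1) ^ m * ((n + 1).choose m : ℝ) * (((m + p).centralBinom : ℝ) / 4 ^ (m + p)))).congr_deriv ?_
  rw [sum_range_succ', momentPoly, mul_sum]
  simp only [Nat.cast_zero, zero_mul, mul_zero, add_zero]
  refine sum_congr rfl fun k _ => ?_
  have hchoose : ((n + 1).choose (k + 1) : ℝ) * (k + 1) = (n + 1) * n.choose k := by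
    exact_mod_cast (Nat.add_one_mul_choose_eq n k).symm
  rw [show k + (p + 1) = k + 1 + p by omega, Nat.add_sub_cancel]
  push_cast
  linear_combination
    -((-1) ^ k * (((k + 1 + p).centralBinom : ℝ) / 4 ^ (k + 1 + p)) * x ^ k) * hchoose

lemma momentPoly_pos_of_nonneg {p n : ℕ} {x : ℝ} (hx : x < 4)
    (hnonneg : ∀ θ, 0 ≤ (1 - x * cos θ ^ 2) ^ n) : 0 < momentPoly p n x := by
  have hint : 0 < ∫ θ in (0:ℝ)..2 * π, cos θ ^ (2 * p) * (1 - x * cos θ ^ 2) ^ n := by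
    refine integral_pos (by positivity) (by fun_prop)
      (fun θ _ => mul_nonneg ((even_two_mul p).pow_nonneg _) (hnonneg θ))
      ⟨π / 3, ⟨by positivity, by linarith [pi_pos]⟩, ?_⟩
    rw [cos_pi_div_three]
    apply mul_pos <;> apply pow_pos <;> linarith
  rw [integral_eq_momentPoly] at hint
  exact pos_of_mul_pos_right hint (by positivity)

lemma momentPoly_pos_of_even {p n : ℕ} {x : ℝ} (hn : Even n) (hx : x < 4) : 0 < momentPoly p n x :=
  momentPoly_pos_of_nonneg hx fun _ => hn.pow_nonneg _

lemma momentPoly_pos_of_le_one (p n : ℕ) {x : ℝ} (hx : x ≤ 1) : 0 < momentPoly p n x :=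
  momentPoly_pos_of_nonneg (by linarith) fun θ => pow_nonneg (by
    nlinarith [sq_nonneg (cos θ), cos_sq_le_one θ]) _

lemma momentPoly_eq_of_integral_eq {p n : ℕ} {x c : ℝ}
    (h : ∫ θ in (0:ℝ)..2 * π, cos θ ^ (2 * p) * (1 - x * cos θ ^ 2) ^ n = 2 * π * c) :
    momentPoly p n x = c := by
  rw [integral_eq_momentPoly] at h
  exact mul_left_cancel₀ (by positivity) h

lemma momentPoly_zero_one (n : ℕ) : momentPoly 0 n 1 = n.centralBinom / 4 ^ n := by
  apply momentPoly_eq_of_integral_eq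
  simp_rw [mul_zero, pow_zero, one_mul, ← sin_sq, ← pow_mul]
  exact integral_sin_pow_two_mul n

lemma momentPoly_zero_two_mul_two (k : ℕ) : momentPoly 0 (2 * k) 2 = k.centralBinom / 4 ^ k := by
  apply momentPoly_eq_of_integral_eq
  have hcos : ∀ θ, cos θ ^ (2 * 0) * (1 - 2 * cos θ ^ 2) ^ (2 * k) = cos (2 * θ) ^ (2 * k) :=
    fun θ => by rw [cos_two_mul, ← neg_sub, (even_two_mul k).neg_pow]; ring
  simp_rw [hcos]
  rw [integral_cos_two_mul_pow, integral_cos_pow_two_mul]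

lemma momentPoly_one_two_mul_add_one_two (k : ℕ) :
    momentPoly 1 (2 * k + 1) 2 = -((k + 1).centralBinom / 4 ^ (k + 1)) / 2 := by
  apply momentPoly_eq_of_integral_eq
  have hcos : ∀ θ, cos θ ^ (2 * 1) * (1 - 2 * cos θ ^ 2) ^ (2 * k + 1)
      = -(cos (2 * θ) ^ (2 * k + 1) + cos (2 * θ) ^ (2 * (k + 1))) / 2 := fun θ => by
    rw [cos_two_mul, ← neg_sub, (odd_two_mul_add_one k).neg_pow]
    ring
  simp_rw [hcos]
  rw [integral_div, integral_neg, integral_add (by apply Continuous.intervalIntegrable; fun_prop)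
    (by apply Continuous.intervalIntegrable; fun_prop), integral_cos_two_mul_pow,
    integral_cos_two_mul_pow, integral_cos_pow_two_mul_add_one, integral_cos_pow_two_mul]
  ring

lemma exists_strictAntiOn_strictMonoOn_of_deriv {f f' : ℝ → ℝ} {a b : ℝ} (hab : a ≤ b)
    (hf : ∀ x, HasDerivAt f (f' x) x) (hf'c : ContinuousOn f' (Set.Icc a b))
    (hf'mono : StrictMonoOn f' (Set.Icc a b)) (ha : f' a < 0) (hb : 0 < f' b) :
    ∃ c ∈ Set.Ioo a b, StrictAntiOn f (Set.Icc a c) ∧ StrictMonoOn f (Set.Icc c b) := by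
  obtain ⟨c, hc, hf'c0⟩ := intermediate_value_Ioo hab hf'c ⟨ha, hb⟩
  have hfc : ∀ s, ContinuousOn f s := fun s => HasDerivAt.continuousOn fun x _ => hf x
  refine ⟨c, hc, strictAntiOn_of_deriv_neg (convex_Icc a c) (hfc _) fun x hx => ?_,
    strictMonoOn_of_deriv_pos (convex_Icc c b) (hfc _) fun x hx => ?_⟩
  · rw [interior_Icc] at hx
    rw [(hf x).deriv, ← hf'c0]
    exact hf'mono ⟨hx.1.le, hx.2.le.trans hc.2.le⟩ (Set.Ioo_subset_Icc_self hc) hx.2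
  · rw [interior_Icc] at hx
    rw [(hf x).deriv, ← hf'c0]
    exact hf'mono (Set.Ioo_subset_Icc_self hc) ⟨hc.1.le.trans hx.1.le, hx.2.le⟩ hx.1

lemma le_max_of_antitoneOn_of_monotoneOn {α β : Type*} [LinearOrder α] [LinearOrder β]
    {f : α → β} {a b c x : α} (hanti : AntitoneOn f (Set.Icc a c))
    (hmono : MonotoneOn f (Set.Icc c b))
    (hx : x ∈ Set.Icc a b) (hac : a ≤ c) (hcb : c ≤ b) : f x ≤ max (f a) (f b) := by
  rcases le_total x c with hxc | hcx
  · exact (hanti ⟨le_rfl, hac⟩ ⟨hx.1, hxc⟩ hx.1).trans (le_max_left _ _)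
  · exact (hmono ⟨hcx, hx.2⟩ ⟨hcb, le_rfl⟩ hx.2).trans (le_max_right _ _)

lemma exists_strictAntiOn_strictMonoOn_momentPoly (j : ℕ) :
    ∃ c ∈ Set.Ioo (1:ℝ) 2, StrictAntiOn (momentPoly 0 (2 * (j + 1))) (Set.Icc 1 c)
      ∧ StrictMonoOn (momentPoly 0 (2 * (j + 1))) (Set.Icc c 2) := by
  have hf'' := fun x => (hasDerivAt_momentPoly 1 (2 * j) x).const_mul (-((2 * j + 1 : ℕ) + 1 : ℝ))
  have hf'mono : StrictMonoOn (fun x => -((2 * j + 1 : ℕ) + 1 : ℝ) * momentPoly 1 (2 * j + 1) x)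
      (Set.Icc 1 2) := by
    refine strictMonoOn_of_deriv_pos (convex_Icc 1 2) (HasDerivAt.continuousOn fun x _ => hf'' x)
      fun x hx => ?_
    rw [interior_Icc] at hx
    rw [(hf'' x).deriv, neg_mul, neg_mul, mul_neg, neg_neg]
    exact mul_pos (by positivity) (mul_pos (by positivity)
      (momentPoly_pos_of_even (even_two_mul j) (by linarith [hx.2])))
  refine exists_strictAntiOn_strictMonoOn_of_deriv one_le_two (hasDerivAt_momentPoly 0 (2 * j + 1))
    (HasDerivAt.continuousOn fun x _ => hf'' x) hf'mono ?_ ?_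
  · nlinarith [momentPoly_pos_of_le_one 1 (2 * j + 1) le_rfl]
  · rw [zero_add, momentPoly_one_two_mul_add_one_two]
    have : (0:ℝ) < (j + 1).centralBinom / 4 ^ (j + 1) :=
      div_pos (mod_cast Nat.centralBinom_pos _) (by positivity)
    nlinarith

theorem stmt6 (n : ℕ) (heven : Even n) (hpos : 0 < n) :
    (∃ xmin ∈ Set.Ioo (1:ℝ) 2,
        StrictAntiOn (F2F1 n) (Set.Icc 1 xmin) ∧ StrictMonoOn (F2F1 n) (Set.Icc xmin 2))
    ∧ (∀ x ∈ Set.Icc (1:ℝ) 2, 0 < F2F1 n x ∧ F2F1 n x ≤ F2F1 n 2)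
    ∧ F2F1 n 2 = (Nat.factorial n : ℝ) / (2 ^ n * ((Nat.factorial (n / 2) : ℝ)) ^ 2)
    ∧ F2F1 n 2 ≤ 1 := by
  obtain ⟨k, rfl⟩ : ∃ k, n = 2 * k := heven.exists_two_nsmul n
  obtain ⟨j, rfl⟩ : ∃ j, k = j + 1 := Nat.exists_eq_add_one.mpr (by omega)
  have hval2 : momentPoly 0 (2 * (j + 1)) 2 = (j + 1).centralBinom / 4 ^ (j + 1) :=
    momentPoly_zero_two_mul_two (j + 1)
  have hval1 : momentPoly 0 (2 * (j + 1)) 1 ≤ momentPoly 0 (2 * (j + 1)) 2 := by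
    rw [momentPoly_zero_one, hval2]
    exact centralBinom_two_mul_div_le (j + 1)
  obtain ⟨c, hc, hanti, hmono⟩ := exists_strictAntiOn_strictMonoOn_momentPoly j
  rw [F2F1_eq_momentPoly]
  refine ⟨⟨c, hc, hanti, hmono⟩, fun x hx => ⟨?_, ?_⟩, ?_, ?_⟩
  · exact momentPoly_pos_of_even (even_two_mul _) (by linarith [hx.2])
  · exact (le_max_of_antitoneOn_of_monotoneOn hanti.antitoneOn hmono.monotoneOn hx hc.1.le
      hc.2.le).trans (max_le hval1 le_rfl)
  · rw [hval2, centralBinom_div_four_pow, Nat.mul_div_cancel_left _ two_pos]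
  · rw [hval2, div_le_one (by positivity)]
    exact_mod_cast Nat.centralBinom_le_four_pow _
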